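/- For L, k, γ̄ > 0 with γ̄ the mean parameter, the random variable with density f(γ) = 2 (k/γ̄)^((L+k)/2) γ^((L+k)/2-1) K_{L-k}(2√(kγ/γ̄)) / (Γ(L)Γ(k)) has Laplace transform ∫₀^∞ e^{-sγ} f(γ) dγ = (k/(γ̄ s))^k U(k, k - L + 1, k/(γ̄ s)) for all s > 0, where U is Tricomi's confluent hypergeometric function. -/

import Mathlib

/-! The substitution `w = √b eᵗ` in the cosh-integral for `K_ν` gives
`∫₀^∞ w^(ν-1) e^(-w - b/w) dw = 2 b^(ν/2) K_ν(2√b)`, which exhibits `f` as a Gamma mixture: with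
`c = k/γ̄`, `f(γ) ∝ ∫₀^∞ γ^(L-1) e^(-cγ/w) · w^(k-L-1) e^(-w) dw`, i.e. `γ` is Gamma of shape `L`
and rate `c/w` given `w`, and `w` is Gamma of shape `k`. Integrating `e^(-sγ)` against the
conditional law first (Tonelli) leaves `Γ(k)⁻¹ ∫₀^∞ w^(k-1) e^(-w) (1 + w/z)^(-L) dw` with
`z = c/s`, and the substitution `w = z t` turns this into `z^k U(k, k-L+1, z)`. -/

open MeasureTheory Set

/-- Modified Bessel function of the second kind, via its integral representation. -/
noncomputable def besselK (ν x : ℝ) : ℝ :=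
  ∫ t in Ioi (0:ℝ), Real.exp (-x * Real.cosh t) * Real.cosh (ν * t)

/-- The density of the sum of `L` fully correlated squared-K interferers with shape `k`
and mean parameter `γ̄_I`. -/
noncomputable def fcDensity (L k γbar x : ℝ) : ℝ :=
  2 * (k / γbar) ^ ((L + k) / 2) * x ^ ((L + k) / 2 - 1) / (Real.Gamma L * Real.Gamma k) *
    besselK (L - k) (2 * Real.sqrt (k * x / γbar))

/-- Tricomi's confluent hypergeometric function, via its integral representation
`U(a,b,z) = (1/Γ(a)) ∫₀^∞ e^{-z t} t^{a-1} (1+t)^{b-a-1} dt` (for `a, z > 0`). -/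
noncomputable def tricomiU (a b z : ℝ) : ℝ :=
  (1 / Real.Gamma a) * ∫ t in Ioi (0:ℝ), Real.exp (-z * t) * t ^ (a - 1) * (1 + t) ^ (b - a - 1)

open Real

lemma sq_div_four_le_cosh (t : ℝ) : t ^ 2 / 4 ≤ cosh t := by
  have h_exp : 1 + |t| + |t| ^ 2 / 2 ≤ exp |t| := quadratic_le_exp_of_nonneg (abs_nonneg t)
  have h_exp_neg : -|t| + 1 ≤ exp (-|t|) := add_one_le_exp _
  rw [← cosh_abs, cosh_eq, ← sq_abs]
  nlinarith [sq_nonneg |t|]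

lemma integrable_exp_mul_sub_mul_cosh (ν : ℝ) {x : ℝ} (hx : 0 < x) :
    Integrable fun t : ℝ => exp (ν * t - x * cosh t) := by
  refine ((integrable_exp_neg_mul_sq (by positivity : 0 < x / 8)).const_mul
    (exp (2 * ν ^ 2 / x))).mono' (by fun_prop) (Filter.Eventually.of_forall fun t => ?_)
  rw [norm_of_nonneg (exp_pos _).le, ← exp_add]
  gcongr
  have h_sq : 2 * ν ^ 2 / x - x / 8 * t ^ 2 - ν * t + x * (t ^ 2 / 4)
      = x / 8 * (t - 4 * ν / x) ^ 2 := by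
    field_simp; ring
  nlinarith [sq_div_four_le_cosh t, sq_nonneg (t - 4 * ν / x)]

lemma besselK_neg (ν x : ℝ) : besselK (-ν) x = besselK ν x := by
  simp only [besselK, neg_mul, cosh_neg]

lemma integral_exp_mul_sub_mul_cosh (ν : ℝ) {x : ℝ} (hx : 0 < x) :
    ∫ t, exp (ν * t - x * cosh t) = 2 * besselK ν x := by
  have h_int := integrable_exp_mul_sub_mul_cosh ν hx
  have h_Iic : ∫ t in Iic 0, exp (ν * t - x * cosh t)
      = ∫ t in Ioi 0, exp (-ν * t - x * cosh t) := by
    rw [← neg_zero, ← integral_comp_neg_Ioi, neg_zero]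
    simp only [neg_mul, mul_neg, cosh_neg]
  rw [← intervalIntegral.integral_Iic_add_Ioi h_int.integrableOn h_int.integrableOn, h_Iic,
    ← integral_add (integrable_exp_mul_sub_mul_cosh (-ν) hx).integrableOn h_int.integrableOn,
    besselK, ← integral_const_mul]
  refine setIntegral_congr_fun measurableSet_Ioi fun t _ => ?_
  simp only [cosh_eq, sub_eq_add_neg, exp_add, neg_mul]
  ring

lemma integral_Ioi_eq_integral_mul_exp_comp (g : ℝ → ℝ) {r : ℝ} (hr : 0 < r) :
    ∫ w in Ioi 0, g w = ∫ t, r * exp t * g (r * exp t) := by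
  have h_image : (fun t => r * exp t) '' univ = Ioi 0 := by
    rw [image_univ, show (range fun t => r * exp t) = (r * ·) '' range exp from
      range_comp (r * ·) exp, range_exp, image_mul_left_Ioi hr, mul_zero]
  have h_deriv (t : ℝ) (_ : t ∈ univ) :
      HasDerivWithinAt (fun t => r * exp t) (r * exp t) univ t :=
    ((hasDerivAt_exp t).const_mul r).hasDerivWithinAt
  have h_inj : InjOn (fun t => r * exp t) univ := fun a _ b _ hab =>
    exp_injective (mul_left_cancel₀ hr.ne' hab)
  rw [← h_image, integral_image_eq_integral_abs_deriv_smul MeasurableSet.univ h_deriv h_inj,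
    setIntegral_univ]
  simp only [smul_eq_mul, abs_of_pos (mul_pos hr (exp_pos _))]

lemma integral_rpow_mul_exp_neg_add_div (ν : ℝ) {b : ℝ} (hb : 0 < b) :
    ∫ w in Ioi 0, w ^ (ν - 1) * exp (-(w + b / w)) = 2 * b ^ (ν / 2) * besselK ν (2 * √b) := by
  set r := √b with hr_def
  have hr : 0 < r := sqrt_pos.2 hb
  have hrr : r * r = b := mul_self_sqrt hb.le
  have h_integrand (t : ℝ) :
      r * exp t * ((r * exp t) ^ (ν - 1) * exp (-(r * exp t + b / (r * exp t))))
        = r ^ ν * exp (ν * t - 2 * r * cosh t) := by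
    have h_b : b / (r * exp t) = r * exp (-t) := by
      rw [exp_neg, ← hrr]; field_simp
    have h_exponent : ν * t - 2 * r * cosh t = t + t * (ν - 1) + -(r * exp t + r * exp (-t)) := by
      rw [cosh_eq]; ring
    rw [h_b, mul_rpow hr.le (exp_pos t).le, ← exp_mul, h_exponent, exp_add, exp_add,
      rpow_sub_one hr.ne']
    field_simp
  rw [integral_Ioi_eq_integral_mul_exp_comp _ hr]
  simp only [h_integrand]
  rw [integral_const_mul, integral_exp_mul_sub_mul_cosh ν (by positivity), hr_def, sqrt_eq_rpow,
    ← rpow_mul hb.le, one_div_mul_eq_div]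
  ring

noncomputable def mixtureKernel (L k c γ w : ℝ) : ℝ :=
  γ ^ (L - 1) * w ^ (k - L - 1) * exp (-(w + c * γ / w))

lemma fcDensity_eq_integral {L k γbar x : ℝ} (hk : 0 < k) (hγ : 0 < γbar) (hx : 0 < x) :
    fcDensity L k γbar x = (k / γbar) ^ L / (Gamma L * Gamma k) *
      ∫ w in Ioi 0, mixtureKernel L k (k / γbar) x w := by
  have hc : 0 < k / γbar := by positivity
  simp only [mixtureKernel, mul_assoc, integral_const_mul]
  rw [show k - L - 1 = (k - L) - 1 by ring,
    integral_rpow_mul_exp_neg_add_div (k - L) (by positivity : 0 < k / γbar * x), fcDensity,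
    show L - k = -(k - L) by ring, besselK_neg, show k * x / γbar = k / γbar * x by ring,
    mul_rpow hc.le hx.le, show (L + k) / 2 = L + (k - L) / 2 by ring,
    show L + (k - L) / 2 - 1 = L - 1 + (k - L) / 2 by ring, rpow_add hc, rpow_add hx]
  ring

lemma integral_exp_neg_mul_mul_mixtureKernel {L s c z w : ℝ} (k : ℝ) (hL : 0 < L) (hc : 0 < c)
    (hz : 0 < z) (hw : 0 < w) (hsz : s * z = c) :
    ∫ γ in Ioi 0, exp (-(s * γ)) * mixtureKernel L k c γ w
      = Gamma L * c ^ (-L) * (w ^ (k - 1) * exp (-w) * (1 + w / z) ^ (-L)) := by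
  have h_rate : s + c / w = c * (1 + w / z) / w := by
    rw [← hsz]; field_simp; ring
  have h_integrand (γ : ℝ) : exp (-(s * γ)) * mixtureKernel L k c γ w
      = w ^ (k - L - 1) * exp (-w) * (γ ^ (L - 1) * exp (-((s + c / w) * γ))) := by
    have h_exp : exp (-(s * γ)) * exp (-(w + c * γ / w)) = exp (-w) * exp (-((s + c / w) * γ)) := by
      rw [← exp_add, ← exp_add]; ring_nf
    rw [mixtureKernel]
    linear_combination γ ^ (L - 1) * w ^ (k - L - 1) * h_exp
  simp only [h_integrand]
  rw [integral_const_mul, h_rate, integral_rpow_mul_exp_neg_mul_Ioi hL (by positivity),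
    one_div_div, div_rpow hw.le (by positivity), mul_rpow hc.le (by positivity), rpow_neg hc.le,
    rpow_neg (by positivity : (0:ℝ) ≤ 1 + w / z),
    show k - 1 = k - L - 1 + L by ring, rpow_add hw]
  field_simp

lemma integrableOn_rpow_mul_exp_neg_mul_one_add_div_rpow {a z p : ℝ} (ha : 0 < a) (hz : 0 < z)
    (hp : p ≤ 0) : IntegrableOn (fun w => w ^ (a - 1) * exp (-w) * (1 + w / z) ^ p) (Ioi 0) := by
  refine (GammaIntegral_convergent ha).mono' (by fun_prop) ?_
  filter_upwards [ae_restrict_mem measurableSet_Ioi] with w (hw : 0 < w)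
  have h_one_add : 1 ≤ 1 + w / z := le_add_of_nonneg_right (div_pos hw hz).le
  rw [norm_of_nonneg (by positivity), mul_comm (exp _)]
  exact mul_le_of_le_one_right (by positivity) (rpow_le_one_of_one_le_of_nonpos h_one_add hp)

lemma Gamma_mul_rpow_mul_tricomiU {a z : ℝ} (ha : 0 < a) (hz : 0 < z) (b : ℝ) :
    Gamma a * z ^ a * tricomiU a b z
      = ∫ w in Ioi 0, w ^ (a - 1) * exp (-w) * (1 + w / z) ^ (b - a - 1) := by
  have h_subst := integral_comp_mul_left_Ioi
    (fun w => w ^ (a - 1) * exp (-w) * (1 + w / z) ^ (b - a - 1)) 0 hz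
  rw [mul_zero, smul_eq_mul, eq_inv_mul_iff_mul_eq₀ hz.ne'] at h_subst
  have h_integrand (t : ℝ) (ht : t ∈ Ioi 0) :
      (z * t) ^ (a - 1) * exp (-(z * t)) * (1 + z * t / z) ^ (b - a - 1)
        = z ^ (a - 1) * (exp (-z * t) * t ^ (a - 1) * (1 + t) ^ (b - a - 1)) := by
    rw [mul_rpow hz.le (le_of_lt ht), mul_div_cancel_left₀ t hz.ne', neg_mul]
    ring
  rw [← h_subst, setIntegral_congr_fun measurableSet_Ioi h_integrand, integral_const_mul,
    tricomiU, rpow_sub_one hz.ne']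
  field_simp [(Gamma_pos_of_pos ha).ne']

lemma integral_integral_swap_of_nonneg {α β : Type*} [MeasurableSpace α] [MeasurableSpace β]
    {μ : Measure α} {ν : Measure β} [SFinite μ] [SFinite ν] {f : α → β → ℝ}
    (hf : AEStronglyMeasurable (Function.uncurry f) (μ.prod ν))
    (hf_nonneg : ∀ᵐ y ∂ν, ∀ᵐ x ∂μ, 0 ≤ f x y) (hf_int : ∀ᵐ y ∂ν, Integrable (f · y) μ)
    (hf_iter : Integrable (fun y => ∫ x, f x y ∂μ) ν) :
    ∫ x, ∫ y, f x y ∂ν ∂μ = ∫ y, ∫ x, f x y ∂μ ∂ν := by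
  refine integral_integral_swap ((integrable_prod_iff' hf).2 ⟨hf_int, hf_iter.congr ?_⟩)
  filter_upwards [hf_nonneg] with y hy
  exact integral_congr_ae (hy.mono fun x hx => (norm_of_nonneg hx).symm)

lemma integral_integral_exp_neg_mul_mixtureKernel {L k s c z : ℝ} (hL : 0 < L) (hk : 0 < k)
    (hc : 0 < c) (hz : 0 < z) (hsz : s * z = c) :
    ∫ γ in Ioi 0, ∫ w in Ioi 0, exp (-(s * γ)) * mixtureKernel L k c γ w
      = Gamma L * c ^ (-L) * (Gamma k * z ^ k * tricomiU k (k - L + 1) z) := by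
  have h_inner (w : ℝ) (hw : w ∈ Ioi 0) := integral_exp_neg_mul_mul_mixtureKernel k hL hc hz hw hsz
  have h_iter : IntegrableOn (fun w => ∫ γ in Ioi 0, exp (-(s * γ)) * mixtureKernel L k c γ w)
      (Ioi 0) :=
    IntegrableOn.congr_fun (Integrable.const_mul
      (integrableOn_rpow_mul_exp_neg_mul_one_add_div_rpow hk hz (neg_nonpos.2 hL.le)) _)
      (fun w hw => (h_inner w hw).symm) measurableSet_Ioi
  rw [integral_integral_swap_of_nonneg (Measurable.aestronglyMeasurable ?measurable) ?nonneg
      ?integrable h_iter, setIntegral_congr_fun measurableSet_Ioi h_inner, integral_const_mul,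
    Gamma_mul_rpow_mul_tricomiU hk hz, show k - L + 1 - k - 1 = -L by ring]
  case measurable =>
    unfold mixtureKernel; fun_prop
  case nonneg =>
    filter_upwards [ae_restrict_mem measurableSet_Ioi] with w (hw : 0 < w)
    filter_upwards [ae_restrict_mem measurableSet_Ioi] with γ (hγ : 0 < γ)
    unfold mixtureKernel; positivity
  case integrable =>
    filter_upwards [ae_restrict_mem measurableSet_Ioi] with w (hw : 0 < w)
    exact Integrable.of_integral_ne_zero (by rw [h_inner w hw]; positivity)

/-- Laplace transform of the fully-correlated interference density:
`∫₀^∞ e^{-sγ} f(γ) dγ = (k/(γ̄ s))^k U(k, k-L+1, k/(γ̄ s))` for `s > 0`. -/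
theorem fcDensity_laplace_transform (L k γbar : ℝ)
    (hL : 0 < L) (hk : 0 < k) (hγ : 0 < γbar) :
    ∀ s : ℝ, 0 < s →
      ∫ γ in Ioi (0:ℝ), Real.exp (-s * γ) * fcDensity L k γbar γ =
        (k / (γbar * s)) ^ k * tricomiU k (k - L + 1) (k / (γbar * s)) := by
  intro s hs
  set c := k / γbar
  set z := k / (γbar * s)
  have hc : 0 < c := by positivity
  have hz : 0 < z := by positivity
  have hsz : s * z = c := by simp only [c, z]; field_simp
  calc ∫ γ in Ioi 0, exp (-s * γ) * fcDensity L k γbar γ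
      = c ^ L / (Gamma L * Gamma k) *
          ∫ γ in Ioi 0, ∫ w in Ioi 0, exp (-(s * γ)) * mixtureKernel L k c γ w := by
        rw [← integral_const_mul]
        refine setIntegral_congr_fun measurableSet_Ioi fun γ (hγ' : 0 < γ) => ?_
        rw [fcDensity_eq_integral hk hγ hγ', integral_const_mul, neg_mul]
        ring
    _ = z ^ k * tricomiU k (k - L + 1) z := by
        rw [integral_integral_exp_neg_mul_mixtureKernel hL hk hc hz hsz, rpow_neg hc.le]
        field_simp [(Gamma_pos_of_pos hL).ne', (Gamma_pos_of_pos hk).ne']
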